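/- Let A be an algebra and R₁, R₂, S reflexive compatible binary relations on A. Then [R₁∘R₂, S|1] ⊆ (S ∩ (R₂⁻ ∘ (S ∩ (R₁⁻ ∘ R₁)) ∘ R₂))*. -/

import Mathlib

open FirstOrder Language

universe u

/-- A binary relation on a structure `A` is compatible (admissible) if it is preserved
by every operation (function symbol) of the language. -/
def Compatible (L : Language) {A : Type u} [L.Structure A] (R : A → A → Prop) : Prop :=
  ∀ (n : ℕ) (f : L.Functions n) (a b : Fin n → A),
    (∀ i, R (a i) (b i)) → R (Structure.funMap f a) (Structure.funMap f b)

/-- `(x, y; z, w) ∈ M(R, S)`: there is a term `t` and tuples `a R a'`, `b S b'` with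
`x = t(a,b)`, `y = t(a,b')`, `z = t(a',b)`, `w = t(a',b')`. -/
def InM (L : Language) {A : Type u} [L.Structure A] (R S : A → A → Prop)
    (x y z w : A) : Prop :=
  ∃ (n m : ℕ) (t : L.Term (Fin n ⊕ Fin m)) (a a' : Fin n → A) (b b' : Fin m → A),
    (∀ i, R (a i) (a' i)) ∧ (∀ j, S (b j) (b' j)) ∧
      x = t.realize (Sum.elim a b) ∧ y = t.realize (Sum.elim a b') ∧
      z = t.realize (Sum.elim a' b) ∧ w = t.realize (Sum.elim a' b')

/-- `[R, S | 1]`: the transitive closure of `{(z,w) : (x,x;z,w) ∈ M(R,S) for some x}`. -/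
def comm1 (L : Language) {A : Type u} [L.Structure A] (R S : A → A → Prop) :
    A → A → Prop :=
  Relation.TransGen (fun z w => ∃ x, InM L R S x x z w)

/-- Relational composition. -/
def rcomp {A : Type u} (R S : A → A → Prop) : A → A → Prop :=
  fun a c => ∃ b, R a b ∧ S b c

/-- Converse of a relation. -/
def rconv {A : Type u} (R : A → A → Prop) : A → A → Prop := fun a b => R b a

/-- Intersection of relations. -/
def rinter {A : Type u} (R S : A → A → Prop) : A → A → Prop := fun a b => R a b ∧ S a b

/-- A congruence: a compatible equivalence relation. -/
def IsCongruence (L : Language) {A : Type u} [L.Structure A] (θ : A → A → Prop) : Prop :=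
  Equivalence θ ∧ Compatible L θ

/-- A tolerance: a reflexive symmetric compatible relation. -/
def IsTolerance (L : Language) {A : Type u} [L.Structure A] (T : A → A → Prop) : Prop :=
  Reflexive T ∧ Symmetric T ∧ Compatible L T

/-- `Cg R`: the smallest congruence containing `R` (intersection of all congruences ⊇ R). -/
def Cg (L : Language) {A : Type u} [L.Structure A] (R : A → A → Prop) : A → A → Prop :=
  fun a b => ∀ θ : A → A → Prop, IsCongruence L θ → (∀ x y, R x y → θ x y) → θ a b

/-- `R°`: the smallest tolerance containing `R`. -/
def tolC (L : Language) {A : Type u} [L.Structure A] (R : A → A → Prop) : A → A → Prop :=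
  fun a b => ∀ T : A → A → Prop, IsTolerance L T → (∀ x y, R x y → T x y) → T a b

/-- `K(R,S;V) = {(z,w) : ∃ x y, (x,y;z,w) ∈ M(R,S) ∧ x V y}`. -/
def Kop (L : Language) {A : Type u} [L.Structure A] (R S V : A → A → Prop) :
    A → A → Prop :=
  fun z w => ∃ x y, InM L R S x y z w ∧ V x y

/-- The join `γ ∨ D`: the smallest congruence containing both `γ` and `D`. -/
def cgJoin (L : Language) {A : Type u} [L.Structure A] (γ D : A → A → Prop) :
    A → A → Prop :=
  fun a b => ∀ θ : A → A → Prop, IsCongruence L θ → (∀ x y, γ x y → θ x y) →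
    (∀ x y, D x y → θ x y) → θ a b

variable {L : Language} {A : Type u} [L.Structure A]

/-!
Every generator of `[R₁ ∘ R₂, S | 1]` already lies in the right-hand relation. Take
`(x, x; z, w) ∈ M(R₁ ∘ R₂, S)` given by a term `t` with `a R₁ c R₂ a'` and `b S b'`, so that
`x = t(a,b) = t(a,b')`, `z = t(a',b)` and `w = t(a',b')`. Passing through the middle tuple `c`,
`z R₂⁻ t(c,b)`, `t(c,b) S t(c,b')`, `t(c,b') R₂ w`, and both `t(c,b)` and `t(c,b')` are
`R₁`-related to the common value `x`, so `t(c,b) (R₁⁻ ∘ R₁) t(c,b')`.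
-/

theorem Compatible.realize {R : A → A → Prop} (hc : Compatible L R) {α : Type*}
    (t : L.Term α) {v v' : α → A} (h : ∀ i, R (v i) (v' i)) :
    R (t.realize v) (t.realize v') := by
  induction t with
  | var i => exact h i
  | func f ts ih => exact hc _ f _ _ ih

section Reflexive

variable {R : A → A → Prop} {n m : ℕ}

theorem Compatible.realize_sumElim_left (hc : Compatible L R) (hR : Reflexive R)
    (t : L.Term (Fin n ⊕ Fin m)) {a a' : Fin n → A} (b : Fin m → A)
    (h : ∀ i, R (a i) (a' i)) :
    R (t.realize (Sum.elim a b)) (t.realize (Sum.elim a' b)) :=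
  hc.realize t (by rintro (i | j); exacts [h i, hR _])

theorem Compatible.realize_sumElim_right (hc : Compatible L R) (hR : Reflexive R)
    (t : L.Term (Fin n ⊕ Fin m)) (a : Fin n → A) {b b' : Fin m → A}
    (h : ∀ j, R (b j) (b' j)) :
    R (t.realize (Sum.elim a b)) (t.realize (Sum.elim a b')) :=
  hc.realize t (by rintro (i | j); exacts [hR _, h j])

end Reflexive

theorem rinter_of_inM_rcomp {R₁ R₂ S : A → A → Prop}
    (hR₁refl : Reflexive R₁) (hR₂refl : Reflexive R₂) (hSrefl : Reflexive S)
    (hR₁c : Compatible L R₁) (hR₂c : Compatible L R₂) (hSc : Compatible L S)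
    {x z w : A} (h : InM L (rcomp R₁ R₂) S x x z w) :
    rinter S (rcomp (rconv R₂) (rcomp (rinter S (rcomp (rconv R₁) R₁)) R₂)) z w := by
  obtain ⟨n, m, t, a, a', b, b', ha, hb, hxb, hxb', rfl, rfl⟩ := h
  choose c hac hca' using ha
  have hS (u : Fin n → A) := hSc.realize_sumElim_right hSrefl t u hb
  have hR₁ (v : Fin m → A) := hR₁c.realize_sumElim_left hR₁refl t v hac
  have hR₂ (v : Fin m → A) := hR₂c.realize_sumElim_left hR₂refl t v hca'
  refine ⟨hS a', _, hR₂ b, _, ⟨hS c, _, hR₁ b, ?_⟩, hR₂ b'⟩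
  rw [← hxb, hxb']
  exact hR₁ b'

theorem stmt7 (R₁ R₂ S : A → A → Prop)
    (hR₁refl : Reflexive R₁) (hR₂refl : Reflexive R₂) (hSrefl : Reflexive S)
    (hR₁c : Compatible L R₁) (hR₂c : Compatible L R₂) (hSc : Compatible L S) :
    ∀ a b, comm1 L (rcomp R₁ R₂) S a b →
      Relation.TransGen
        (rinter S (rcomp (rconv R₂) (rcomp (rinter S (rcomp (rconv R₁) R₁)) R₂))) a b :=
  Relation.TransGen.mono fun _ _ ⟨_, hM⟩ =>
    rinter_of_inM_rcomp hR₁refl hR₂refl hSrefl hR₁c hR₂c hSc hM
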